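/- arXiv:2508.10484 — 2 statements merged into one kernel-verified Lean document; each statement's English description precedes it below -/
import Mathlib

section
/- The natural density of pairs of positive integers that are coprime equals 6/π². Precisely, the number of pairs (a,b) with 1 ≤ a,b ≤ n and gcd(a,b) = 1, divided by n², tends to 6/π² as n → ∞. -/
/-!
Möbius inversion, `∑_{d ∣ gcd(a,b)} μ d = [gcd(a,b) = 1]`, counts the coprime pairs in `[1,n]²` as
`∑_{d ≤ n} μ(d) ⌊n/d⌋²`. After division by `n²` the `d`-th term tends to `μ(d)/d²` and is bounded
by `1/d²`, so dominated convergence gives the limit `∑ μ(d)/d² = 1/ζ(2) = 6/π²`.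
-/

open Filter Topology Finset ArithmeticFunction Real
open scoped ArithmeticFunction.Moebius ArithmeticFunction.zeta LSeries.notation

theorem sum_divisors_moebius {R : Type*} [Ring R] (n : ℕ) :
    ∑ d ∈ n.divisors, (μ d : R) = if n = 1 then 1 else 0 := by
  simpa only [coe_mul_zeta_apply, one_apply, intCoe_apply] using
    congrArg (fun f : ArithmeticFunction R => f n) coe_moebius_mul_coe_zeta

theorem divisors_gcd_eq_filter_Icc {a b n : ℕ} (ha : 0 < a) (han : a ≤ n) :
    (Nat.gcd a b).divisors = {d ∈ Icc 1 n | d ∣ a ∧ d ∣ b} := by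
  ext d
  simp only [Nat.mem_divisors, mem_filter, mem_Icc, Nat.dvd_gcd_iff]
  constructor
  · rintro ⟨⟨hda, hdb⟩, -⟩
    exact ⟨⟨Nat.pos_of_dvd_of_pos hda ha, (Nat.le_of_dvd ha hda).trans han⟩, hda, hdb⟩
  · rintro ⟨-, hda, hdb⟩
    exact ⟨⟨hda, hdb⟩, Nat.gcd_ne_zero_left ha.ne'⟩

theorem Icc_filter_dvd_card_eq_div (n d : ℕ) : #{x ∈ Icc 1 n | d ∣ x} = n / d :=
  Nat.Ioc_filter_dvd_card_eq_div n d

theorem card_coprime_pairs_eq_sum_moebius {R : Type*} [CommRing R] (n : ℕ) :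
    (#{p ∈ Icc 1 n ×ˢ Icc 1 n | Nat.gcd p.1 p.2 = 1} : R) =
      ∑ d ∈ Icc 1 n, μ d * ((n / d : ℕ) : R) ^ 2 := by
  have indicator_eq : ∀ p ∈ Icc 1 n ×ˢ Icc 1 n, (if Nat.gcd p.1 p.2 = 1 then 1 else 0 : R) =
      ∑ d ∈ Icc 1 n, if d ∣ p.1 ∧ d ∣ p.2 then (μ d : R) else 0 := by
    intro p hp
    simp only [mem_product, mem_Icc] at hp
    rw [← sum_divisors_moebius, divisors_gcd_eq_filter_Icc hp.1.1 hp.1.2, sum_filter]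
  rw [natCast_card_filter, sum_congr rfl indicator_eq, sum_comm]
  refine sum_congr rfl fun d _ => ?_
  rw [← sum_filter, filter_product (p := (d ∣ ·)) (q := (d ∣ ·)), sum_const, card_product,
    Icc_filter_dvd_card_eq_div, nsmul_eq_mul]
  push_cast
  ring

theorem tendsto_natCast_div_div_self (d : ℕ) :
    Tendsto (fun n : ℕ => ((n / d : ℕ) : ℝ) / n) atTop (𝓝 (1 / d)) := by
  have := (tendsto_nat_floor_mul_div_atTop (a := 1 / (d : ℝ)) (by positivity)).comp
    tendsto_natCast_atTop_atTop
  refine this.congr fun n => ?_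
  rw [Function.comp_apply, one_div_mul_eq_div, Nat.floor_div_eq_div]

theorem natCast_div_div_self_le (n d : ℕ) : ((n / d : ℕ) : ℝ) / n ≤ 1 / d := by
  rcases eq_or_ne n 0 with rfl | hn
  · simp
  calc ((n / d : ℕ) : ℝ) / n ≤ (n / d) / n := by gcongr; exact Nat.cast_div_le
    _ = 1 / d := by field_simp

theorem LSeries_moebius_two : L ↗μ 2 = 6 / (π : ℂ) ^ 2 := by
  have h2 : 1 < (2 : ℂ).re := by norm_num
  have h := LSeries_zeta_mul_Lseries_moebius h2
  rw [LSeries_zeta_eq_riemannZeta h2, riemannZeta_two] at h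
  have hπ : (π : ℂ) ≠ 0 := Complex.ofReal_ne_zero.mpr pi_ne_zero
  field_simp
  linear_combination 6 * h

theorem tsum_moebius_div_sq : ∑' d : ℕ, (μ d : ℝ) / (d : ℝ) ^ 2 = 6 / π ^ 2 := by
  have hterm : ∀ d : ℕ, LSeries.term (↗μ) 2 d = ((μ d / (d : ℝ) ^ 2 : ℝ) : ℂ) := by
    intro d
    rcases eq_or_ne d 0 with rfl | hd
    · simp
    · rw [LSeries.term_of_ne_zero hd, ← Nat.cast_ofNat, Complex.cpow_natCast]
      push_cast
      rfl
  apply Complex.ofReal_injective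
  rw [Complex.ofReal_tsum, ← tsum_congr hterm]
  push_cast
  exact LSeries_moebius_two

theorem card_coprime_pairs_div_sq_eq_tsum (n : ℕ) :
    (#{p ∈ Icc 1 n ×ˢ Icc 1 n | Nat.gcd p.1 p.2 = 1} : ℝ) / (n : ℝ) ^ 2 =
      ∑' d : ℕ, (μ d : ℝ) * (((n / d : ℕ) : ℝ) / n) ^ 2 := by
  rw [card_coprime_pairs_eq_sum_moebius, sum_div, tsum_eq_sum (s := Icc 1 n)]
  · exact sum_congr rfl fun d _ => by rw [div_pow, mul_div_assoc]
  · intro d hd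
    rcases Nat.eq_zero_or_pos d with rfl | hd_pos
    · simp
    · have : n / d = 0 := Nat.div_eq_of_lt (by simp only [mem_Icc] at hd; omega)
      simp [this]

theorem norm_moebius_mul_natCast_div_div_self_sq_le (n d : ℕ) :
    ‖(μ d : ℝ) * (((n / d : ℕ) : ℝ) / n) ^ 2‖ ≤ 1 / (d : ℝ) ^ 2 := by
  have hμ : |(μ d : ℝ)| ≤ 1 := by exact_mod_cast abs_moebius_le_one
  calc ‖(μ d : ℝ) * (((n / d : ℕ) : ℝ) / n) ^ 2‖
    _ = |(μ d : ℝ)| * (((n / d : ℕ) : ℝ) / n) ^ 2 := by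
      rw [norm_mul, norm_pow, Real.norm_eq_abs, Real.norm_of_nonneg (by positivity)]
    _ ≤ 1 * (1 / d) ^ 2 := by gcongr ?_ * ?_ ^ 2; exact natCast_div_div_self_le n d
    _ = 1 / (d : ℝ) ^ 2 := by ring

/-- The natural density of pairs of coprime positive integers is `6 / π²`. -/
theorem coprime_pairs_density :
    Tendsto (fun n : ℕ =>
        (((Finset.Icc 1 n ×ˢ Finset.Icc 1 n).filter
            fun p : ℕ × ℕ => Nat.gcd p.1 p.2 = 1).card : ℝ) / (n : ℝ) ^ 2)
      atTop (nhds (6 / Real.pi ^ 2)) := by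
  simp only [card_coprime_pairs_div_sq_eq_tsum, ← tsum_moebius_div_sq]
  refine tendsto_tsum_of_dominated_convergence (summable_one_div_nat_pow.mpr one_lt_two)
    (fun d => ?_) (.of_forall fun n d => norm_moebius_mul_natCast_div_div_self_sq_le n d)
  simpa [div_pow, div_eq_mul_inv] using
    ((tendsto_natCast_div_div_self d).pow 2).const_mul (μ d : ℝ)
end

section
/- The unit group of the ring of S-integers of a function field K over 𝔽_q with |S| = r + 1 is isomorphic to ℤ^r × 𝔽_q^×. -/
section FunctionFieldModel

variable {Fq K Place : Type*} [Field Fq] [Fintype Fq] [Field K] [Algebra Fq K]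

/-- The degree of a divisor `D = ∑ c_𝔭 𝔭` of the function field,
namely `∑ c_𝔭 deg 𝔭`. Divisors are modelled as finitely supported
`ℤ`-valued functions on the type `Place` of prime divisors of `K`. -/
def divDeg (deg : Place → ℕ) (D : Place →₀ ℤ) : ℤ :=
  D.sum fun p n => n * (deg p : ℤ)

/-- The Riemann-Roch space `L(D) = {a ∈ K^× : (a) + D ≥ 0} ∪ {0}`,
where `prin u` is the principal divisor of the nonzero element `u`. -/
def Lset (prin : Kˣ → (Place →₀ ℤ)) (D : Place →₀ ℤ) : Set K :=
  {a : K | a = 0 ∨ ∃ u : Kˣ, (u : K) = a ∧ 0 ≤ prin u + D}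

end FunctionFieldModel

/-- The group of `S`-units: the unit group `𝒪_S^×` of the ring of `S`-integers,
realised as the subgroup of `K^×` consisting of elements whose principal
divisor is supported inside `S` (no zeros or poles outside `S`). -/
def SUnits {K Place : Type*} [Field K] (prin : Kˣ → (Place →₀ ℤ))
    (hmul : ∀ a b : Kˣ, prin (a * b) = prin a + prin b)
    (S : Finset Place) : Subgroup Kˣ where
  carrier := {u : Kˣ | ∀ p ∉ S, prin u p = 0}
  mul_mem' := by
    intro a b ha hb p hp
    rw [hmul]
    simp [Finsupp.add_apply, ha p hp, hb p hp]
  one_mem' := by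
    intro p hp
    have h1 : prin (1 : Kˣ) = 0 := by
      have h := hmul 1 1
      rw [mul_one] at h
      exact (left_eq_add.mp h)
    simp [h1]
  inv_mem' := by
    intro u hu p hp
    have h1 : prin (1 : Kˣ) = 0 := by
      have h := hmul 1 1
      rw [mul_one] at h
      exact (left_eq_add.mp h)
    have h2 : prin u + prin u⁻¹ = 0 := by
      rw [← hmul, mul_inv_cancel, h1]
    have h3 := congrArg (fun f : Place →₀ ℤ => f p) h2
    simp only [Finsupp.add_apply, Finsupp.coe_zero, Pi.zero_apply] at h3
    have h4 := hu p hp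
    omega

/-!
Send an `S`-unit to its orders at all places of `S` but one, `ω`. An `S`-unit in the kernel has
its divisor supported at `ω`, so by the degree formula its divisor vanishes and it is a constant.
The image is a full-rank sublattice of `ℤ^r`: for `p ∈ S \ {ω}`, Riemann–Roch makes the
divisors `E n = (n deg ω + g) p - (n deg p) ω` equivalent to effective divisors of the fixed
degree `g deg p`, of which there are finitely many; two of them coincide, and the quotient of
the corresponding functions is an `S`-unit of nonzero order at `p` with divisor supported on
`{p, ω}`. A full-rank sublattice is free, so the extension of it by `𝔽_q^×` splits.
-/

open Module Function

theorem Function.Exact.nonempty_linearEquiv_prod {R M N P : Type*} [Ring R] [AddCommGroup M]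
    [AddCommGroup N] [AddCommGroup P] [Module R M] [Module R N] [Module R P] [Projective R P]
    {f : M →ₗ[R] N} {g : N →ₗ[R] P} (h : Exact f g) (hf : Injective f) (hg : Surjective g) :
    Nonempty (N ≃ₗ[R] M × P) :=
  let ⟨l, hl⟩ := g.exists_rightInverse_of_surjective (LinearMap.range_eq_top.2 hg)
  ⟨(h.splitSurjectiveEquiv hf ⟨l, hl⟩).1⟩

theorem CommGroup.nonempty_mulEquiv_pi_prod_of_exact {A G ι : Type*} [CommGroup A]
    [CommGroup G] [Fintype ι] {i : A →* G} (hi : Injective i) {v : Additive G →ₗ[ℤ] (ι → ℤ)}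
    (hexact : Exact i.toAdditive v) (hv : finrank ℤ (LinearMap.range v) = Fintype.card ι) :
    Nonempty (G ≃* (ι → Multiplicative ℤ) × A) := by
  let W : LinearMap.range v ≃ₗ[ℤ] (ι → ℤ) := LinearEquiv.ofFinrankEq _ _ (by simpa using hv)
  have hexact' : Exact i.toAdditive.toIntLinearMap (W.toLinearMap ∘ₗ v.rangeRestrict) := by
    rw [LinearMap.exact_iff, LinearEquiv.ker_comp, LinearMap.ker_rangeRestrict,
      ← LinearMap.exact_iff]
    exact hexact
  obtain ⟨L⟩ :=
    hexact'.nonempty_linearEquiv_prod hi (W.surjective.comp v.surjective_rangeRestrict)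
  exact ⟨(AddEquiv.toMultiplicativeRight L.toAddEquiv).trans <|
    (MulEquiv.prodMultiplicative _ _).trans <|
      ((MulEquiv.multiplicativeAdditive A).prodCongr (MulEquiv.funMultiplicative ι ℤ)).trans
        (MulEquiv.prodComm)⟩

section Divisor

variable {Place : Type*} (deg : Place → ℕ)

lemma divDeg_add (D E : Place →₀ ℤ) : divDeg deg (D + E) = divDeg deg D + divDeg deg E :=
  Finsupp.sum_add_index' (fun _ => by simp) (fun _ _ _ => by ring)

lemma divDeg_single (p : Place) (c : ℤ) : divDeg deg (Finsupp.single p c) = c * deg p :=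
  Finsupp.sum_single_index (by simp)

lemma apply_mul_deg_le_divDeg {D : Place →₀ ℤ} (hD : 0 ≤ D) (p : Place) :
    D p * deg p ≤ divDeg deg D := by
  have hterm : ∀ p', 0 ≤ D p' * deg p' := fun p' => mul_nonneg (hD p') (by positivity)
  by_cases hp : p ∈ D.support
  · exact Finset.single_le_sum (fun p' _ => hterm p') hp
  · rw [Finsupp.notMem_support_iff.mp hp, zero_mul]
    exact Finset.sum_nonneg fun p' _ => hterm p'

variable {deg}

lemma eq_zero_of_divDeg_eq_zero (hdeg : ∀ p, 0 < deg p) {D : Place →₀ ℤ} {ω : Place}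
    (hD : divDeg deg D = 0) (hω : ∀ p ≠ ω, D p = 0) : D = 0 := by
  have hsingle : D = Finsupp.single ω (D ω) := by
    ext p
    rcases eq_or_ne p ω with rfl | hp
    · simp
    · simp [hω p hp, Finsupp.single_eq_of_ne' hp.symm]
  rw [hsingle, divDeg_single, mul_eq_zero, Nat.cast_eq_zero] at hD
  rw [hsingle, hD.resolve_right (hdeg ω).ne', Finsupp.single_zero]

lemma finite_setOf_nonneg_divDeg_le (hdeg : ∀ p, 0 < deg p)
    (hfin : ∀ n : ℕ, {p : Place | deg p ≤ n}.Finite) (d : ℕ) :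
    {D : Place →₀ ℤ | 0 ≤ D ∧ divDeg deg D ≤ d}.Finite := by
  classical
  let B : Place →₀ ℤ := Finsupp.indicator (hfin d).toFinset fun _ _ => (d : ℤ)
  refine (Set.finite_Icc 0 B).subset ?_
  rintro D ⟨hD, hDd⟩
  refine ⟨hD, fun p => ?_⟩
  have hle : D p * deg p ≤ d := (apply_mul_deg_le_divDeg deg hD p).trans hDd
  have hdeg1 : (1 : ℤ) ≤ deg p := by exact_mod_cast hdeg p
  by_cases hp : deg p ≤ d
  · simp only [B, Finsupp.indicator_apply, Set.Finite.mem_toFinset, Set.mem_ofPred_eq, hp,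
      dite_true]
    nlinarith [hD p]
  · have hp' : (d : ℤ) < deg p := by exact_mod_cast not_le.mp hp
    simp only [B, Finsupp.indicator_apply, Set.Finite.mem_toFinset, Set.mem_ofPred_eq, hp,
      dite_false]
    nlinarith [hD p]

end Divisor

section Principal

variable {K Place : Type*} [Field K] {prin : Kˣ → (Place →₀ ℤ)}
  (hmul : ∀ a b : Kˣ, prin (a * b) = prin a + prin b)

noncomputable def prinHom : Kˣ →* Multiplicative (Place →₀ ℤ) :=
  MonoidHom.mk' (fun u => .ofAdd (prin u)) hmul

include hmul in
lemma prin_div (a b : Kˣ) : prin (a / b) = prin a - prin b :=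
  congrArg Multiplicative.toAdd (map_div (prinHom hmul) a b)

end Principal

section RiemannRoch

variable {K Place : Type*} [Field K] {deg : Place → ℕ} {prin : Kˣ → (Place →₀ ℤ)}
  {ell : (Place →₀ ℤ) → ℕ} {g : ℕ} {Can : Place →₀ ℤ}

lemma ell_pos_of_genus_le_divDeg
    (hRR : ∀ D : Place →₀ ℤ, (ell D : ℤ) = divDeg deg D - g + 1 + ell (Can - D))
    {D : Place →₀ ℤ} (hD : (g : ℤ) ≤ divDeg deg D) : 0 < ell D := by
  have := hRR D
  omega

lemma exists_prin_add_nonneg_of_ell_pos {q : ℕ} (hq : 1 < q)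
    (hell : ∀ D : Place →₀ ℤ, Nat.card (Lset prin D) = q ^ ell D)
    {D : Place →₀ ℤ} (hD : 0 < ell D) : ∃ u : Kˣ, 0 ≤ prin u + D := by
  by_contra! h
  have hL : Lset prin D = {0} := by
    ext a
    simp only [Lset, Set.mem_ofPred_eq, Set.mem_singleton_iff, or_iff_left_iff_imp]
    rintro ⟨u, -, hu⟩
    exact absurd hu (h u)
  have := hell D
  rw [hL, Nat.card_unique] at this
  exact (Nat.one_lt_pow hD.ne' hq).ne this

variable {q : ℕ} (hdeg : ∀ p, 0 < deg p) (hfin : ∀ n : ℕ, {p : Place | deg p ≤ n}.Finite)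
  (hmul : ∀ a b : Kˣ, prin (a * b) = prin a + prin b)
  (hdegprin : ∀ u : Kˣ, divDeg deg (prin u) = 0) (hq : 1 < q)
  (hell : ∀ D : Place →₀ ℤ, Nat.card (Lset prin D) = q ^ ell D)
  (hRR : ∀ D : Place →₀ ℤ, (ell D : ℤ) = divDeg deg D - g + 1 + ell (Can - D))
include hdeg hfin hmul hdegprin hq hell hRR

/-- The pigeonhole principle behind the finiteness of the degree-zero class group. -/
lemma exists_lt_prin_eq_sub (E : ℕ → Place →₀ ℤ) {d : ℕ} (hgd : g ≤ d)
    (hE : ∀ n, divDeg deg (E n) = d) : ∃ n m, n < m ∧ ∃ u : Kˣ, prin u = E m - E n := by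
  choose u hu using fun n => exists_prin_add_nonneg_of_ell_pos hq hell
    (ell_pos_of_genus_le_divDeg hRR (D := E n) (by rw [hE]; exact_mod_cast hgd))
  have hmaps : ∀ n, prin (u n) + E n ∈ {D : Place →₀ ℤ | 0 ≤ D ∧ divDeg deg D ≤ d} :=
    fun n => ⟨hu n, by rw [divDeg_add, hdegprin, hE, zero_add]⟩
  obtain ⟨n, m, hnm, heq⟩ :=
    (finite_setOf_nonneg_divDeg_le hdeg hfin d).exists_lt_map_eq_of_forall_mem hmaps
  exact ⟨n, m, hnm, u n / u m, by rw [prin_div hmul, sub_eq_sub_iff_add_eq_add, heq, add_comm]⟩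

lemma exists_prin_apply_ne_zero_of_ne {p ω : Place} (hpω : p ≠ ω) :
    ∃ u : Kˣ, prin u p ≠ 0 ∧ ∀ p', p' ≠ p → p' ≠ ω → prin u p' = 0 := by
  classical
  let E : ℕ → Place →₀ ℤ := fun n =>
    Finsupp.single p ((n : ℤ) * deg ω + g) + Finsupp.single ω (-((n : ℤ) * deg p))
  have hE : ∀ n, divDeg deg (E n) = (g * deg p : ℕ) := fun n => by
    simp only [E, divDeg_add, divDeg_single]
    push_cast
    ring
  have hgd : g ≤ g * deg p := Nat.le_mul_of_pos_right g (hdeg p)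
  obtain ⟨n, m, hnm, u, hu⟩ :=
    exists_lt_prin_eq_sub hdeg hfin hmul hdegprin hq hell hRR E hgd hE
  refine ⟨u, ?_, fun p' hp hω => ?_⟩
  · have hpos : (0 : ℤ) < (m - n) * deg ω := mul_pos (by omega) (by exact_mod_cast hdeg ω)
    simp only [hu, E, Finsupp.sub_apply, Finsupp.add_apply, Finsupp.single_eq_same,
      Finsupp.single_eq_of_ne' hpω.symm]
    linarith
  · simp [hu, E, Finsupp.single_eq_of_ne' hp.symm, Finsupp.single_eq_of_ne' hω.symm]

end RiemannRoch

section SUnits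

variable {Fq K Place : Type*} [Field Fq] [Field K] [Algebra Fq K] {prin : Kˣ → (Place →₀ ℤ)}
  (hmul : ∀ a b : Kˣ, prin (a * b) = prin a + prin b) {S : Finset Place}

def constsToSUnits (hconst : ∀ c : Fqˣ, prin (Units.map (algebraMap Fq K).toMonoidHom c) = 0) :
    Fqˣ →* SUnits prin hmul S :=
  (Units.map (algebraMap Fq K).toMonoidHom).codRestrict _ fun c p _ => by rw [hconst]; rfl

lemma constsToSUnits_injective
    (hconst : ∀ c : Fqˣ, prin (Units.map (algebraMap Fq K).toMonoidHom c) = 0) :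
    Injective (constsToSUnits hmul hconst (S := S)) := fun _ _ h =>
  Units.map_injective (algebraMap Fq K).injective (congrArg Subtype.val h)

variable {r : ℕ} (e : S ≃ Fin (r + 1))

noncomputable def sValuation : Additive (SUnits prin hmul S) →ₗ[ℤ] (Fin r → ℤ) :=
  let v := (AddMonoidHom.pi fun i => Finsupp.applyAddHom (e.symm i.castSucc : Place)).comp
    (MonoidHom.toAdditiveLeft ((prinHom hmul).comp (SUnits prin hmul S).subtype))
  { v with map_smul' := map_zsmul v }

lemma sValuation_apply (u : Additive (SUnits prin hmul S)) (i : Fin r) :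
    sValuation hmul e u i = prin (u.toMul : Kˣ) (e.symm i.castSucc) :=
  rfl

variable {deg : Place → ℕ} (hdeg : ∀ p, 0 < deg p)
  (hdegprin : ∀ u : Kˣ, divDeg deg (prin u) = 0)
include hdeg hdegprin

lemma exact_constsToSUnits_sValuation
    (hconst : ∀ c : Fqˣ, prin (Units.map (algebraMap Fq K).toMonoidHom c) = 0)
    (hexact : ∀ u : Kˣ, prin u = 0 →
      ∃ c : Fqˣ, Units.map (algebraMap Fq K).toMonoidHom c = u) :
    Exact (constsToSUnits hmul hconst).toAdditive (sValuation hmul e) := by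
  intro u
  constructor
  · intro hu
    have hprin : prin (u.toMul : Kˣ) = 0 := by
      refine eq_zero_of_divDeg_eq_zero hdeg (hdegprin _) (ω := e.symm (Fin.last r))
        fun p hp => ?_
      by_cases hpS : p ∈ S
      · obtain ⟨i, hi⟩ := e.symm.surjective ⟨p, hpS⟩
        rcases Fin.eq_castSucc_or_eq_last i with ⟨j, rfl⟩ | rfl
        · simpa [sValuation_apply, hi] using congrFun hu j
        · exact absurd (congrArg Subtype.val hi).symm hp
      · exact u.toMul.2 p hpS
    obtain ⟨c, hc⟩ := hexact _ hprin
    exact ⟨Additive.ofMul c, Subtype.ext hc⟩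
  · rintro ⟨c, rfl⟩
    ext i
    simp only [sValuation_apply, constsToSUnits, MonoidHom.toAdditive_apply_apply, toMul_ofMul]
    exact DFunLike.congr_fun (hconst c.toMul) _

lemma finrank_range_sValuation {q : ℕ} {ell : (Place →₀ ℤ) → ℕ} {g : ℕ} {Can : Place →₀ ℤ}
    (hfin : ∀ n : ℕ, {p : Place | deg p ≤ n}.Finite) (hq : 1 < q)
    (hell : ∀ D : Place →₀ ℤ, Nat.card (Lset prin D) = q ^ ell D)
    (hRR : ∀ D : Place →₀ ℤ, (ell D : ℤ) = divDeg deg D - g + 1 + ell (Can - D)) :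
    finrank ℤ (LinearMap.range (sValuation hmul e)) = r := by
  refine le_antisymm ((Submodule.finrank_le _).trans (by simp)) ?_
  have he : Injective fun i => (e.symm i : Place) := Subtype.val_injective.comp e.symm.injective
  have hlast : ∀ i : Fin r, (e.symm i.castSucc : Place) ≠ e.symm (Fin.last r) :=
    fun i h => (Fin.castSucc_lt_last i).ne (he h)
  choose u hu0 hu using fun i => exists_prin_apply_ne_zero_of_ne hdeg hfin hmul hdegprin hq hell
    hRR (hlast i)
  have hmem : ∀ i, u i ∈ SUnits prin hmul S := fun i p hp =>
    hu i p (fun h => hp (h ▸ (e.symm _).2)) (fun h => hp (h ▸ (e.symm _).2))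
  have hsingle : ∀ i, sValuation hmul e (.ofMul ⟨u i, hmem i⟩) =
      Pi.single i (prin (u i) (e.symm i.castSucc)) := fun i => by
    ext j
    rcases eq_or_ne j i with rfl | hji
    · simp [sValuation_apply]
    · rw [sValuation_apply, Pi.single_eq_of_ne hji]
      exact hu i _ (fun h => hji (Fin.castSucc_injective _ (he h))) (hlast j)
  have hli : LinearIndependent ℤ fun i => (⟨_, LinearMap.mem_range_self _ (.ofMul ⟨u i, hmem i⟩)⟩ :
      LinearMap.range (sValuation hmul e)) :=
    .of_comp (Submodule.subtype _) <| by
      have h := Pi.linearIndependent_single_of_ne_zero (R := ℤ) hu0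
      simp only [← hsingle] at h
      exact h
  simpa using hli.fintype_card_le_finrank

end SUnits

theorem S_unit_theorem_general
    {Fq K Place : Type*} [Field Fq] [Fintype Fq] [Field K] [Algebra Fq K]

    (q : ℕ) (hq : Fintype.card Fq = q)
    (deg : Place → ℕ) (hdeg : ∀ p, 0 < deg p)
    (hfin : ∀ n : ℕ, {p : Place | deg p ≤ n}.Finite)
    (prin : Kˣ → (Place →₀ ℤ))
    (hmul : ∀ a b : Kˣ, prin (a * b) = prin a + prin b)
    (hconst : ∀ c : Fqˣ, prin (Units.map (algebraMap Fq K).toMonoidHom c) = 0)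
    (hdegprin : ∀ u : Kˣ, divDeg deg (prin u) = 0)
    (ell : (Place →₀ ℤ) → ℕ)
    (hell : ∀ D : Place →₀ ℤ, Nat.card (Lset prin D) = q ^ ell D)
    (g : ℕ) (Can : Place →₀ ℤ)
    (hRR : ∀ D : Place →₀ ℤ,
      (ell D : ℤ) = divDeg deg D - g + 1 + ell (Can - D))
    (hexact : ∀ u : Kˣ, prin u = 0 →
      ∃ c : Fqˣ, Units.map (algebraMap Fq K).toMonoidHom c = u)
    (S : Finset Place) (r : ℕ) (hS : S.card = r + 1) :
    Nonempty ((SUnits prin hmul S) ≃* ((Fin r → Multiplicative ℤ) × Fqˣ)) := by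
  have hq1 : 1 < q := hq ▸ Fintype.one_lt_card
  let e := S.equivFinOfCardEq hS
  refine CommGroup.nonempty_mulEquiv_pi_prod_of_exact (constsToSUnits_injective hmul hconst)
    (exact_constsToSUnits_sValuation hmul e hdeg hdegprin hconst hexact) ?_
  rw [finrank_range_sValuation hmul e hdeg hdegprin hfin hq1 hell hRR, Fintype.card_fin]

/-- The `S`-unit theorem for function fields (Rosen, Proposition 14.2): for a
function field `K` over `𝔽_q` with `𝔽_q` as field of constants and
`|S| = r + 1`, the unit group of the ring of `S`-integers is isomorphic to
`ℤ^r × 𝔽_q^×`. -/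
theorem S_unit_theorem
    {Fq K Place : Type*} [Field Fq] [Fintype Fq] [Field K] [Algebra Fq K]

    (q : ℕ) (hq : Fintype.card Fq = q)
    (deg : Place → ℕ) (hdeg : ∀ p, 0 < deg p)
    (hfin : ∀ n : ℕ, {p : Place | deg p ≤ n}.Finite)
    (prin : Kˣ → (Place →₀ ℤ))
    (hmul : ∀ a b : Kˣ, prin (a * b) = prin a + prin b)
    (hadd : ∀ a b c : Kˣ, (a : K) + (b : K) = (c : K) →
      ∀ p, min (prin a p) (prin b p) ≤ prin c p)
    (hconst : ∀ c : Fqˣ, prin (Units.map (algebraMap Fq K).toMonoidHom c) = 0)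
    (hdegprin : ∀ u : Kˣ, divDeg deg (prin u) = 0)
    (ell : (Place →₀ ℤ) → ℕ)
    (hell : ∀ D : Place →₀ ℤ, Nat.card (Lset prin D) = q ^ ell D)
    (g : ℕ) (Can : Place →₀ ℤ)
    (hRR : ∀ D : Place →₀ ℤ,
      (ell D : ℤ) = divDeg deg D - g + 1 + ell (Can - D))
    (hCan : divDeg deg Can = 2 * (g : ℤ) - 2)
    (hexact : ∀ u : Kˣ, prin u = 0 →
      ∃ c : Fqˣ, Units.map (algebraMap Fq K).toMonoidHom c = u)
    (S : Finset Place) (r : ℕ) (hS : S.card = r + 1) :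
    Nonempty ((SUnits prin hmul S) ≃* ((Fin r → Multiplicative ℤ) × Fqˣ)) :=
  S_unit_theorem_general q hq deg hdeg hfin prin hmul hconst hdegprin ell hell g Can hRR hexact S r
    hS
end
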